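/- Let Ω₀* = ℂ \ {z : Re z ≤ 0, Im z = -1}. There exists R > 1 such that for every z on the upper half circle K = ∂D(-i, R) ∩ {Im z ≥ 0}, the hyperbolic distances in Ω₀* satisfy ρ_{Ω₀*}(z, -1) > ρ_{Ω₀*}(z, 1). -/

import Mathlib

open Complex Metric Set Filter Function Topology

noncomputable section

/-- A Riemann map: a conformal (holomorphic bijective) map from the unit disk onto `Ω`. -/
def IsRiemannMap (f : ℂ → ℂ) (Ω : Set ℂ) : Prop :=
  DifferentiableOn ℂ f (Metric.ball 0 1) ∧ Set.BijOn f (Metric.ball 0 1) Ω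

/-- The Poincaré (hyperbolic) distance on the unit disk,
`ρ(z,w) = (1/2) log((1+|T|)/(1-|T|))`, `T = (z-w)/(1-z conj w)`. -/
def rhoDisk (z w : ℂ) : ℝ :=
  (1/2) * Real.log ((1 + ‖(z - w) / (1 - z * (starRingEnd ℂ) w)‖) /
    (1 - ‖(z - w) / (1 - z * (starRingEnd ℂ) w)‖))

/-- Hyperbolic distance on a simply connected domain, transported by a Riemann map `f`. -/
def hypDist (f : ℂ → ℂ) (z w : ℂ) : ℝ :=
  rhoDisk (Function.invFunOn f (Metric.ball 0 1) z) (Function.invFunOn f (Metric.ball 0 1) w)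

/-- Hyperbolic density `λ_Ω(w) = λ_D(f⁻¹(w)) / |f'(f⁻¹(w))|`, with `λ_D(z) = 1/(1-|z|²)`. -/
def hypDensity (f : ℂ → ℂ) (w : ℂ) : ℝ :=
  (1 / (1 - ‖Function.invFunOn f (Metric.ball 0 1) w‖^2)) /
    ‖deriv f (Function.invFunOn f (Metric.ball 0 1) w)‖

/-- A real-valued function is harmonic on a planar domain iff it is locally the real
part of a holomorphic function. -/
def HarmOn (u : ℂ → ℝ) (Ω : Set ℂ) : Prop :=
  ∀ z ∈ Ω, ∃ r > 0, Metric.ball z r ⊆ Ω ∧ ∃ F : ℂ → ℂ,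
    DifferentiableOn ℂ F (Metric.ball z r) ∧ ∀ w ∈ Metric.ball z r, u w = (F w).re

/-- `u` is the harmonic measure `ω(·, E, Ω)`: a harmonic function on `Ω` with values in
`[0,1]`, boundary limit `1` at points of `E` away from `∂Ω \ E`, and boundary limit `0`
at points of `∂Ω \ E` away from `E`. -/
def IsHarmonicMeasureFun (Ω E : Set ℂ) (u : ℂ → ℝ) : Prop :=
  HarmOn u Ω ∧ (∀ z ∈ Ω, u z ∈ Set.Icc (0:ℝ) 1) ∧
  (∀ ζ ∈ E \ closure (frontier Ω \ E), Filter.Tendsto u (nhdsWithin ζ Ω) (nhds 1)) ∧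
  (∀ ζ ∈ (frontier Ω \ E) \ closure E, Filter.Tendsto u (nhdsWithin ζ Ω) (nhds 0))

/-- The slit plane `Ω₀* = ℂ \ {z : Re z ≤ 0, Im z = -1}`. -/
def slitPlane' : Set ℂ := {z : ℂ | ¬ (z.re ≤ 0 ∧ z.im = -1)}


open Complex Metric Set Filter Function Topology

noncomputable section


open Complex Metric Set Filter Function Topology

noncomputable section


open Complex Metric Set Filter Function Topology

noncomputable section

/-- Möbius map of the disk. -/
def mob (a z : ℂ) : ℂ := (a - z) / (1 - (starRingEnd ℂ) a * z)

lemma normSq_mob_identity (a z : ℂ) :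
    normSq (1 - (starRingEnd ℂ) a * z) - normSq (a - z)
      = (1 - normSq a) * (1 - normSq z) := by
  simp only [normSq_apply, Complex.sub_re, Complex.sub_im, Complex.mul_re, Complex.mul_im,
    Complex.one_re, Complex.one_im, Complex.conj_re, Complex.conj_im]
  ring

lemma mem_ball_iff_abs {z : ℂ} : z ∈ ball (0:ℂ) 1 ↔ ‖z‖ < 1 := by
  rw [mem_ball_zero_iff]

lemma mem_ball_iff_normSq {z : ℂ} : z ∈ ball (0:ℂ) 1 ↔ normSq z < 1 := by
  rw [mem_ball_iff_abs]
  constructor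
  · intro h; nlinarith [norm_nonneg z, Complex.sq_norm z]
  · intro h; nlinarith [norm_nonneg z, Complex.sq_norm z]

lemma mob_denom_ne {a z : ℂ} (ha : a ∈ ball (0:ℂ) 1) (hz : z ∈ ball (0:ℂ) 1) :
    1 - (starRingEnd ℂ) a * z ≠ 0 := by
  rw [mem_ball_iff_abs] at ha hz
  intro h
  have h1 : (starRingEnd ℂ) a * z = 1 := by linear_combination -h
  have h2 := congrArg (‖·‖) h1
  simp only [norm_mul, Complex.norm_conj, norm_one] at h2
  nlinarith [norm_nonneg a, norm_nonneg z]

lemma mob_mem_ball {a z : ℂ} (ha : a ∈ ball (0:ℂ) 1) (hz : z ∈ ball (0:ℂ) 1) :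
    mob a z ∈ ball (0:ℂ) 1 := by
  have hd := mob_denom_ne ha hz
  have hid := normSq_mob_identity a z
  rw [mem_ball_iff_normSq] at *
  rw [mob, normSq_div]
  have hdp : 0 < normSq (1 - (starRingEnd ℂ) a * z) := normSq_pos.2 hd
  rw [div_lt_one hdp]
  nlinarith

lemma mob_self (a : ℂ) : mob a a = 0 := by simp [mob]

lemma mob_zero {a : ℂ} : mob a 0 = a := by simp [mob]

lemma mob_mob {a z : ℂ} (ha : a ∈ ball (0:ℂ) 1) (hz : z ∈ ball (0:ℂ) 1) :
    mob a (mob a z) = z := by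
  have hd := mob_denom_ne ha hz
  have hd2 := mob_denom_ne ha (mob_mem_ball ha hz)
  rw [show mob a (mob a z) = (a - mob a z) / (1 - (starRingEnd ℂ) a * mob a z) from rfl,
    div_eq_iff hd2, mob]
  have hd' : 1 - z * (starRingEnd ℂ) a ≠ 0 := by rwa [mul_comm]
  field_simp
  ring




lemma mob_differentiableAt {a z : ℂ} (ha : a ∈ ball (0:ℂ) 1) (hz : z ∈ ball (0:ℂ) 1) :
    DifferentiableAt ℂ (mob a) z := by
  have hd := mob_denom_ne ha hz
  apply DifferentiableAt.div
  · exact (differentiable_const a).differentiableAt.sub differentiable_id.differentiableAt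
  · exact (differentiable_const (1:ℂ)).differentiableAt.sub
      ((differentiable_const _).differentiableAt.mul differentiable_id.differentiableAt)
  · exact hd

/-- Schwarz–Pick. -/
theorem schwarz_pick {h : ℂ → ℂ} (hd : DifferentiableOn ℂ h (ball 0 1))
    (hm : MapsTo h (ball 0 1) (ball 0 1)) {a b : ℂ}
    (ha : a ∈ ball (0:ℂ) 1) (hb : b ∈ ball (0:ℂ) 1) :
    ‖mob (h a) (h b)‖ ≤ ‖mob a b‖ := by
  have hha := hm ha
  set g : ℂ → ℂ := fun z => mob (h a) (h (mob a z)) with hg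
  have hgd : DifferentiableOn ℂ g (ball 0 1) := by
    intro z hz
    have h1 : DifferentiableAt ℂ (mob a) z := mob_differentiableAt ha hz
    have h2 : DifferentiableWithinAt ℂ h (ball 0 1) (mob a z) := hd _ (mob_mem_ball ha hz)
    have h3 : DifferentiableAt ℂ (mob (h a)) (h (mob a z)) :=
      mob_differentiableAt hha (hm (mob_mem_ball ha hz))
    have h23 := h3.comp_differentiableWithinAt (mob a z) h2
    exact h23.comp z h1.differentiableWithinAt (fun w hw => mob_mem_ball ha hw)
  have hgm : MapsTo g (ball 0 1) (ball 0 1) := fun z hz =>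
    mob_mem_ball hha (hm (mob_mem_ball ha hz))
  have hg0 : g 0 = 0 := by rw [hg]; simp only [mob_zero, mob_self]
  have key := Complex.norm_le_norm_of_mapsTo_ball hgd (hgm.mono_right ball_subset_closedBall) hg0
    (z := mob a b) (mem_ball_iff_abs.1 (mob_mem_ball ha hb))
  have hk : g (mob a b) = mob (h a) (h b) := by
    rw [hg]; simp only; rw [mob_mob ha hb]
  rwa [hk] at key




theorem pd_invariance {h hinv : ℂ → ℂ} (hd : DifferentiableOn ℂ h (ball 0 1))
    (hm : MapsTo h (ball 0 1) (ball 0 1)) (hd' : DifferentiableOn ℂ hinv (ball 0 1))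
    (hm' : MapsTo hinv (ball 0 1) (ball 0 1)) (hli : ∀ z ∈ ball (0:ℂ) 1, hinv (h z) = z)
    {a b : ℂ} (ha : a ∈ ball (0:ℂ) 1) (hb : b ∈ ball (0:ℂ) 1) :
    ‖mob (h a) (h b)‖ = ‖mob a b‖ := by
  refine le_antisymm (schwarz_pick hd hm ha hb) ?_
  have := schwarz_pick hd' hm' (hm ha) (hm hb)
  rwa [hli a ha, hli b hb] at this

lemma rhoDisk_eq (z w : ℂ) : rhoDisk z w =
    (1/2) * Real.log ((1 + ‖mob z w‖) / (1 - ‖mob z w‖)) := by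
  have : ‖(z - w) / (1 - z * (starRingEnd ℂ) w)‖ = ‖mob z w‖ := by
    rw [mob, norm_div, norm_div]
    congr 1
    rw [show (1 : ℂ) - z * (starRingEnd ℂ) w = (starRingEnd ℂ) (1 - (starRingEnd ℂ) z * w) by
      simp [map_sub, map_mul], Complex.norm_conj]
  rw [rhoDisk, this]

lemma rhoDisk_strict_mono {a b c : ℂ} (ha : a ∈ ball (0:ℂ) 1) (hb : b ∈ ball (0:ℂ) 1)
    (hc : c ∈ ball (0:ℂ) 1) (h : ‖mob a b‖ < ‖mob a c‖) :
    rhoDisk a b < rhoDisk a c := by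
  rw [rhoDisk_eq, rhoDisk_eq]
  set s := ‖mob a b‖
  set t := ‖mob a c‖
  have hs0 : 0 ≤ s := norm_nonneg _
  have ht1 : t < 1 := mem_ball_iff_abs.1 (mob_mem_ball ha hc)
  have hs1 : s < 1 := lt_trans h ht1
  have h1 : (0:ℝ) < (1 + s) / (1 - s) := div_pos (by linarith) (by linarith)
  have h2 : (1 + s) / (1 - s) < (1 + t) / (1 - t) := by
    rw [div_lt_div_iff₀ (by linarith) (by linarith)]
    nlinarith
  have := Real.log_lt_log h1 h2
  linarith


theorem deriv_ne_zero_of_injOn {f : ℂ → ℂ} {s : Set ℂ} (hs : IsOpen s)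
    (hd : DifferentiableOn ℂ f s) (hi : InjOn f s) {a : ℂ} (ha : a ∈ s) :
    deriv f a ≠ 0 := by
  intro h0
  have hsn : ∀ᶠ z in 𝓝 a, z ∈ s := hs.mem_nhds ha
  have hfa : AnalyticAt ℂ f a := hd.analyticAt (hs.mem_nhds ha)
  have hga : AnalyticAt ℂ (fun z => f z - f a) a := hfa.sub analyticAt_const
  -- not eventually constant
  have hnc : ¬ (∀ᶠ z in 𝓝 a, f z - f a = 0) := by
    intro hev
    have h1 : ∀ᶠ z in 𝓝[≠] a, f z - f a = 0 ∧ z ∈ s :=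
      (hev.and hsn).filter_mono nhdsWithin_le_nhds
    have h2 : ∀ᶠ z in 𝓝[≠] a, z ≠ a := self_mem_nhdsWithin
    obtain ⟨z, ⟨hz1, hz2⟩, hz3⟩ := (h1.and h2).exists
    exact hz3 (hi hz2 ha (by linear_combination hz1))
  -- order analysis
  rcases eq_top_or_lt_top (analyticOrderAt (fun z => f z - f a) a) with ho | ho
  · exact hnc (analyticOrderAt_eq_top.1 ho)
  obtain ⟨n, hn⟩ : ∃ n : ℕ, analyticOrderAt (fun z => f z - f a) a = n := by
    lift analyticOrderAt (fun z => f z - f a) a to ℕ using ho.ne with n hn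
    exact ⟨n, rfl⟩
  obtain ⟨φ, hφa, hφ0, hev⟩ := (hga.analyticOrderAt_eq_natCast).1 hn
  simp only [smul_eq_mul] at hev
  -- n = 0 impossible
  match n, hev with
  | 0, hev => 
    have := hev.self_of_nhds
    simp at this
    exact hφ0 this.symm
  | 1, hev =>
    -- deriv is φ a ≠ 0, contradiction with h0
    have hD : HasDerivAt (fun z => (z - a) ^ 1 * φ z) ((1:ℂ) * φ a + (a - a) ^ 1 * deriv φ a) a := by
      simpa using (((hasDerivAt_id a).sub_const a).pow 1).fun_mul hφa.differentiableAt.hasDerivAt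
    have hev' : (fun z => f z - f a) =ᶠ[𝓝 a] (fun z => (z - a) ^ 1 * φ z) := hev
    have hd1 : deriv (fun z => f z - f a) a = deriv (fun z => (z - a) ^ 1 * φ z) a :=
      hev'.deriv_eq
    rw [hD.deriv] at hd1
    simp only [deriv_sub_const, h0] at hd1
    simp at hd1
    exact hφ0 hd1.symm
  | (m + 2), hev =>
    set n := m + 2 with hnm
    have hn0 : (n:ℂ) ≠ 0 := Nat.cast_ne_zero.2 (by omega)
    have hφne : ∀ᶠ z in 𝓝 a, φ z ≠ 0 := hφa.continuousAt.eventually_ne hφ0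
    set c : ℂ := Complex.exp ((n:ℂ)⁻¹ * Complex.log (φ a)) with hc
    set q : ℂ → ℂ := fun z => Complex.exp ((n:ℂ)⁻¹ * Complex.log (φ z / φ a)) * c with hqdef
    have hqa : AnalyticAt ℂ q a := by
      apply AnalyticAt.mul _ analyticAt_const
      apply AnalyticAt.cexp
      apply AnalyticAt.mul analyticAt_const
      apply AnalyticAt.clog (hφa.div analyticAt_const hφ0)
      simp [div_self hφ0, Complex.one_mem_slitPlane]
    have hqz : ∀ᶠ z in 𝓝 a, q z ^ n = φ z := by
      filter_upwards [hφne] with z hz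
      rw [hqdef]
      simp only
      rw [mul_pow, ← Complex.exp_nat_mul, ← Complex.exp_nat_mul, ← mul_assoc, ← mul_assoc,
        mul_inv_cancel₀ hn0, one_mul, one_mul, Complex.exp_log (div_ne_zero hz hφ0),
        Complex.exp_log hφ0, div_mul_cancel₀ _ hφ0]
    have hqane : q a ≠ 0 := mul_ne_zero (Complex.exp_ne_zero _) (Complex.exp_ne_zero _)
    set Φ : ℂ → ℂ := fun z => (z - a) * q z with hΦdef
    have hΦa : AnalyticAt ℂ Φ a := ((analyticAt_id).sub analyticAt_const).mul hqa
    have hΦ0 : Φ a = 0 := by simp [hΦdef]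
    have hΦev : ∀ᶠ z in 𝓝 a, f z = f a + Φ z ^ n := by
      filter_upwards [hev, hqz] with z h1 h2
      rw [hΦdef]
      simp only
      rw [mul_pow, h2, ← h1]
      ring
    have hΦd : HasDerivAt Φ (q a) a := by
      have h1 : HasDerivAt (fun z : ℂ => z - a) 1 a := (hasDerivAt_id a).sub_const a
      have := h1.fun_mul hqa.differentiableAt.hasDerivAt
      simpa using this
    have hstrict : HasStrictDerivAt Φ (q a) a := by
      have := hΦa.contDiffAt.hasStrictDerivAt (n := 1) one_ne_zero
      rwa [hΦd.deriv] at this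
    set hF := hstrict.hasStrictFDerivAt_equiv hqane with hFdef
    set G := hF.localInverse Φ _ a with hGdef
    have hGright : ∀ᶠ y in 𝓝 (0:ℂ), Φ (G y) = y := by
      have := hF.eventually_right_inverse
      rwa [hΦ0] at this
    have hGcont : ContinuousAt G 0 := by
      have := hF.localInverse_continuousAt
      rwa [hΦ0] at this
    have hG0 : G 0 = a := by
      have := hF.localInverse_apply_image
      rwa [hΦ0] at this
    -- the root of unity
    set ζ : ℂ := Complex.exp (2 * Real.pi * I / n) with hζ
    have hζn : ζ ^ n = 1 := by
      rw [hζ, ← Complex.exp_nat_mul, mul_div_cancel₀ _ hn0, Complex.exp_two_pi_mul_I]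
    have hζ1 : ζ ≠ 1 := by
      intro hone
      rw [hζ, Complex.exp_eq_one_iff] at hone
      obtain ⟨k, hk⟩ := hone
      have h2π : (2 * Real.pi * I : ℂ) ≠ 0 := by
        simp [Real.pi_ne_zero, I_ne_zero]
      field_simp at hk
      have h4 : ((k:ℂ) * n - 1) * (2 * Real.pi * I) = 0 := by linear_combination (-(2 * Real.pi * I)) * hk
      rcases mul_eq_zero.1 h4 with h5 | h5
      · have h6 : (k:ℂ) * n = 1 := by linear_combination h5
        have hkn : k * (n:ℤ) = 1 := by exact_mod_cast h6
        have : (n:ℤ) ≤ 1 := Int.le_of_dvd one_pos ⟨k, by linarith [hkn]⟩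
        omega
      · exact h2π h5
    -- choose w
    have hSnhds : {z | z ∈ s ∧ f z = f a + Φ z ^ n} ∈ 𝓝 a := by
      filter_upwards [hsn, hΦev] with z h1 h2
      exact ⟨h1, h2⟩
    have hGS : ∀ᶠ w in 𝓝 (0:ℂ), G w ∈ s ∧ f (G w) = f a + Φ (G w) ^ n := by
      have : Tendsto G (𝓝 0) (𝓝 a) := by rw [← hG0]; exact hGcont
      exact this.eventually (by exact hSnhds)
    have hmul : Tendsto (fun w : ℂ => ζ * w) (𝓝 0) (𝓝 (0:ℂ)) := by
      have h := (tendsto_id (x := 𝓝 (0:ℂ))).const_mul ζ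
      simpa using h
    have hall : ∀ᶠ w in 𝓝 (0:ℂ), (Φ (G w) = w ∧ (G w ∈ s ∧ f (G w) = f a + Φ (G w) ^ n))
        ∧ (Φ (G (ζ * w)) = ζ * w ∧ (G (ζ * w) ∈ s ∧ f (G (ζ * w)) = f a + Φ (G (ζ * w)) ^ n)) := by
      exact (hGright.and hGS).and (hmul.eventually (hGright.and hGS))
    have hall' : ∀ᶠ w in 𝓝[≠] (0:ℂ),
        ((Φ (G w) = w ∧ (G w ∈ s ∧ f (G w) = f a + Φ (G w) ^ n))
        ∧ (Φ (G (ζ * w)) = ζ * w ∧ (G (ζ * w) ∈ s ∧ f (G (ζ * w)) = f a + Φ (G (ζ * w)) ^ n))) :=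
      hall.filter_mono nhdsWithin_le_nhds
    have hne' : ∀ᶠ w in 𝓝[≠] (0:ℂ), w ≠ 0 := self_mem_nhdsWithin
    obtain ⟨w, ⟨⟨hw1, hw2, hw3⟩, ⟨hw4, hw5, hw6⟩⟩, hwne⟩ := (hall'.and hne').exists
    have hwne : w ≠ 0 := hwne
    have hfeq : f (G w) = f (G (ζ * w)) := by
      rw [hw3, hw6, hw1, hw4, mul_pow, hζn, one_mul]
    have heq := hi hw2 hw5 hfeq
    have : w = ζ * w := by
      conv_lhs => rw [← hw1]
      rw [heq, hw4]
    have : (ζ - 1) * w = 0 := by ring_nf; linear_combination -this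
    rcases mul_eq_zero.1 this with h | h
    · exact hζ1 (by linear_combination h)
    · exact hwne h



theorem invFunOn_differentiableAt {f : ℂ → ℂ} {Ω : Set ℂ} (hΩ : IsOpen Ω)
    (hd : DifferentiableOn ℂ f (ball 0 1)) (hb : BijOn f (ball 0 1) Ω)
    {w₀ : ℂ} (hw : w₀ ∈ Ω) : DifferentiableAt ℂ (invFunOn f (ball 0 1)) w₀ := by
  set F := invFunOn f (ball (0:ℂ) 1) with hFdef
  have hinv := hb.invOn_invFunOn
  have hFmem : ∀ y ∈ Ω, F y ∈ ball (0:ℂ) 1 := by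
    intro y hy
    obtain ⟨x, hx, rfl⟩ := hb.surjOn hy
    rw [hFdef, hinv.1 hx]
    exact hx
  have hFw : F w₀ ∈ ball (0:ℂ) 1 := hFmem w₀ hw
  have hfb : f (F w₀) = w₀ := hinv.2 hw
  have hder : deriv f (F w₀) ≠ 0 := deriv_ne_zero_of_injOn isOpen_ball hd hb.injOn hFw
  have hstrict : HasStrictDerivAt f (deriv f (F w₀)) (F w₀) :=
    ((hd.analyticAt (isOpen_ball.mem_nhds hFw)).contDiffAt).hasStrictDerivAt (n := 1) one_ne_zero
  set hF := hstrict.hasStrictFDerivAt_equiv hder with hFeq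
  set G := hF.localInverse f _ (F w₀) with hGdef
  have hGdiff : DifferentiableAt ℂ G w₀ := by
    have := hF.to_localInverse.differentiableAt
    rwa [hfb] at this
  have hGright : ∀ᶠ y in 𝓝 w₀, f (G y) = y := by
    have := hF.eventually_right_inverse
    rwa [hfb] at this
  have hGcont : ContinuousAt G w₀ := by
    have := hF.localInverse_continuousAt
    rwa [hfb] at this
  have hG0 : G w₀ = F w₀ := by
    have := hF.localInverse_apply_image
    rwa [hfb] at this
  have hGball : ∀ᶠ y in 𝓝 w₀, G y ∈ ball (0:ℂ) 1 := by
    have : Tendsto G (𝓝 w₀) (𝓝 (F w₀)) := by rw [← hG0]; exact hGcont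
    exact this.eventually (isOpen_ball.eventually_mem hFw)
  have heq : F =ᶠ[𝓝 w₀] G := by
    filter_upwards [hGright, hGball, hΩ.eventually_mem hw] with y h1 h2 h3
    have hFy : f (F y) = y := hinv.2 h3
    exact hb.injOn (hFmem y h3) h2 (by rw [hFy, h1])
  exact (heq.differentiableAt_iff).2 hGdiff


def sq2 (z : ℂ) : ℂ := z ^ (1/2 : ℂ)
def psi (z : ℂ) : ℂ := (sq2 (z + I) - 1) / (sq2 (z + I) + 1)
def psiInv (p : ℂ) : ℂ := ((1 + p) / (1 - p)) ^ 2 - I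


lemma mem_slitPlane'_iff {z : ℂ} : z ∈ slitPlane' ↔ z + I ∈ Complex.slitPlane := by
  simp only [slitPlane', Complex.mem_slitPlane_iff, Set.mem_setOf_eq, Complex.add_re,
    Complex.add_im, Complex.I_re, Complex.I_im, add_zero]
  constructor
  · intro h
    by_cases hre : 0 < z.re
    · exact Or.inl hre
    · right
      intro him
      exact h ⟨by linarith, by linarith⟩
  · rintro (h | h) ⟨h1, h2⟩
    · linarith
    · exact h (by rw [h2]; ring)

lemma isOpen_slitPlane' : IsOpen slitPlane' := by
  have : slitPlane' = (fun z => z + I) ⁻¹' Complex.slitPlane := by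
    ext z; exact mem_slitPlane'_iff
  rw [this]
  exact Complex.isOpen_slitPlane.preimage (continuous_id.add continuous_const)

lemma sq2_sq {z : ℂ} : (sq2 z) ^ 2 = z := by
  have := Complex.cpow_nat_inv_pow z (n := 2) (by norm_num)
  rw [sq2, show ((1:ℂ)/2) = ((2:ℕ):ℂ)⁻¹ by norm_num]
  exact this

lemma sq2_re_pos {z : ℂ} (hz : z ∈ Complex.slitPlane) : 0 < (sq2 z).re := by
  have hz0 : z ≠ 0 := by
    intro h; rw [h] at hz
    simp [Complex.mem_slitPlane_iff] at hz
  rw [sq2, Complex.cpow_def_of_ne_zero hz0, Complex.exp_re]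
  apply mul_pos (Real.exp_pos _)
  apply Real.cos_pos_of_mem_Ioo
  have h1 : (Complex.log z * (1/2)).im = z.arg / 2 := by
    have : (Complex.log z * (1/2)).im = (Complex.log z).im * (1/2) := by
      simp [Complex.mul_im]
    rw [this, Complex.log_im]; ring
  rw [h1]
  have h2 := Complex.neg_pi_lt_arg z
  have h3 := Complex.arg_le_pi z
  have h4 := Complex.slitPlane_arg_ne_pi hz
  have h5 : z.arg < Real.pi := lt_of_le_of_ne h3 h4
  constructor
  · linarith
  · linarith

lemma sq_mem_slitPlane {w : ℂ} (hw : 0 < w.re) : w ^ 2 ∈ Complex.slitPlane := by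
  rw [Complex.mem_slitPlane_iff]
  by_cases hy : w.im = 0
  · left
    rw [pow_two, Complex.mul_re, hy]
    simpa using mul_pos hw hw
  · right
    rw [pow_two, Complex.mul_im]
    intro h
    have : w.re * w.im = 0 := by linarith
    rcases mul_eq_zero.1 this with h' | h'
    · linarith
    · exact hy h'

lemma sq2_of_sq {w : ℂ} (hw : 0 < w.re) : sq2 (w ^ 2) = w := by
  have h1 : (sq2 (w ^ 2)) ^ 2 = w ^ 2 := sq2_sq
  have h2 : 0 < (sq2 (w ^ 2)).re := sq2_re_pos (sq_mem_slitPlane hw)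
  have h3 : (sq2 (w ^ 2) - w) * (sq2 (w ^ 2) + w) = 0 := by
    ring_nf
    linear_combination h1
  rcases mul_eq_zero.1 h3 with h | h
  · linear_combination h
  · exfalso
    have : (sq2 (w ^ 2) + w).re = 0 := by rw [h]; simp
    rw [Complex.add_re] at this
    linarith

-- the square root of z + I for z ∈ slitPlane'
lemma slit_re_pos {z : ℂ} (hz : z ∈ slitPlane') : 0 < (sq2 (z + I)).re :=
  sq2_re_pos (mem_slitPlane'_iff.1 hz)

lemma re_pos_ne_neg_one {u : ℂ} (hu : 0 < u.re) : u + 1 ≠ 0 := by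
  intro h
  have : (u + 1).re = 0 := by rw [h]; simp
  rw [Complex.add_re, Complex.one_re] at this
  linarith

lemma psi_mem_ball {z : ℂ} (hz : z ∈ slitPlane') : psi z ∈ ball (0:ℂ) 1 := by
  set u := sq2 (z + I) with hu
  have hur : 0 < u.re := slit_re_pos hz
  have hne : u + 1 ≠ 0 := re_pos_ne_neg_one hur
  rw [mem_ball_iff_normSq, psi, normSq_div]
  have hdp : 0 < normSq (u + 1) := normSq_pos.2 hne
  rw [div_lt_one hdp]
  have : normSq (u + 1) - normSq (u - 1) = 4 * u.re := by
    simp only [normSq_apply, Complex.add_re, Complex.add_im, Complex.sub_re, Complex.sub_im,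
      Complex.one_re, Complex.one_im]
    ring
  linarith

lemma psiInv_psi {z : ℂ} (hz : z ∈ slitPlane') : psiInv (psi z) = z := by
  set u := sq2 (z + I) with hu
  have hur : 0 < u.re := slit_re_pos hz
  have hne : u + 1 ≠ 0 := re_pos_ne_neg_one hur
  have hne' : 1 + sq2 (z + I) ≠ 0 := by rw [add_comm]; exact hne
  have h1 : (1:ℂ) - psi z = 2 / (u + 1) := by
    rw [psi, ← hu]
    field_simp
    ring
  have h2 : (1:ℂ) + psi z = 2 * u / (u + 1) := by
    rw [psi, ← hu]
    field_simp
    ring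
  have h3 : ((1 + psi z) / (1 - psi z)) = u := by
    rw [h1, h2]
    field_simp
  rw [psiInv, h3, sq2_sq]
  ring

lemma cayley_re_pos {p : ℂ} (hp : p ∈ ball (0:ℂ) 1) : 0 < ((1 + p) / (1 - p)).re := by
  have hns : normSq p < 1 := mem_ball_iff_normSq.1 hp
  have hne : (1:ℂ) - p ≠ 0 := by
    intro h
    have : p = 1 := by linear_combination -h
    rw [this] at hns
    simp [normSq_one] at hns
  have hdp : 0 < normSq (1 - p) := normSq_pos.2 hne
  rw [Complex.div_re]
  have hnum : (1 + p).re * (1 - p).re + (1 + p).im * (1 - p).im = 1 - normSq p := by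
    simp only [normSq_apply, Complex.add_re, Complex.add_im, Complex.sub_re, Complex.sub_im,
      Complex.one_re, Complex.one_im]
    ring
  rw [← add_div, hnum]
  exact div_pos (by linarith) hdp

lemma one_sub_ne {p : ℂ} (hp : p ∈ ball (0:ℂ) 1) : (1:ℂ) - p ≠ 0 := by
  have hns : normSq p < 1 := mem_ball_iff_normSq.1 hp
  intro h
  have : p = 1 := by linear_combination -h
  rw [this] at hns
  simp [normSq_one] at hns

lemma psiInv_mem {p : ℂ} (hp : p ∈ ball (0:ℂ) 1) : psiInv p ∈ slitPlane' := by
  rw [mem_slitPlane'_iff]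
  have : psiInv p + I = ((1 + p) / (1 - p)) ^ 2 := by rw [psiInv]; ring
  rw [this]
  exact sq_mem_slitPlane (cayley_re_pos hp)

lemma psi_psiInv {p : ℂ} (hp : p ∈ ball (0:ℂ) 1) : psi (psiInv p) = p := by
  set w := (1 + p) / (1 - p) with hw
  have hwr : 0 < w.re := cayley_re_pos hp
  have h1 : psiInv p + I = w ^ 2 := by rw [psiInv]; ring
  have hne := one_sub_ne hp
  have hwne : w + 1 ≠ 0 := re_pos_ne_neg_one hwr
  rw [psi, h1, sq2_of_sq hwr]
  rw [div_eq_iff hwne, hw]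
  field_simp
  ring

lemma psi_differentiableAt {z : ℂ} (hz : z ∈ slitPlane') : DifferentiableAt ℂ psi z := by
  have h0 : z + I ∈ Complex.slitPlane := mem_slitPlane'_iff.1 hz
  have h1 : DifferentiableAt ℂ (fun z : ℂ => sq2 (z + I)) z := by
    show DifferentiableAt ℂ (fun z : ℂ => (z + I) ^ (1/2 : ℂ)) z
    apply DifferentiableAt.cpow (differentiableAt_id.add_const I) (differentiableAt_const _)
    simpa using h0
  have hne : sq2 (z + I) + 1 ≠ 0 := re_pos_ne_neg_one (slit_re_pos hz)
  exact DifferentiableAt.div (h1.sub_const 1) (h1.add_const 1) hne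

lemma psiInv_differentiableAt {p : ℂ} (hp : p ∈ ball (0:ℂ) 1) :
    DifferentiableAt ℂ psiInv p := by
  have hne := one_sub_ne hp
  apply DifferentiableAt.sub_const
  apply DifferentiableAt.pow
  exact DifferentiableAt.div (differentiableAt_const _ |>.add differentiableAt_id)
    ((differentiableAt_const _).sub differentiableAt_id) hne



lemma re_pos_ne_neg_one' {u : ℂ} (hu : 0 < u.re) : u + 1 ≠ 0 := by
  intro h
  have : (u + 1).re = 0 := by rw [h]; simp
  rw [Complex.add_re, Complex.one_re] at this
  linarith

lemma re_add_pos_ne {u v : ℂ} (hu : 0 < u.re) (hv : 0 < v.re) :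
    (starRingEnd ℂ) u + v ≠ 0 := by
  intro h
  have : ((starRingEnd ℂ) u + v).re = 0 := by rw [h]; simp
  rw [Complex.add_re, Complex.conj_re] at this
  linarith

lemma cayley_mob_abs {u v : ℂ} (hu : 0 < u.re) (hv : 0 < v.re) :
    ‖mob ((u - 1)/(u + 1)) ((v - 1)/(v + 1))‖
      = ‖(u - v) / (u + (starRingEnd ℂ) v)‖ := by
  have hu1 : u + 1 ≠ 0 := re_pos_ne_neg_one' hu
  have hv1 : v + 1 ≠ 0 := re_pos_ne_neg_one' hv
  have hcu1 : (starRingEnd ℂ) u + 1 ≠ 0 := by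
    intro h
    have : ((starRingEnd ℂ) u + 1).re = 0 := by rw [h]; simp
    rw [Complex.add_re, Complex.conj_re, Complex.one_re] at this
    linarith
  have hcv : (starRingEnd ℂ) u + v ≠ 0 := re_add_pos_ne hu hv
  have h1 : (u - 1)/(u + 1) - (v - 1)/(v + 1) = 2 * (u - v) / ((u + 1) * (v + 1)) := by
    field_simp
    ring
  have h2 : 1 - (starRingEnd ℂ) ((u - 1)/(u + 1)) * ((v - 1)/(v + 1))
      = 2 * ((starRingEnd ℂ) u + v) / (((starRingEnd ℂ) u + 1) * (v + 1)) := by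
    simp only [map_div₀, map_sub, map_one]
    rw [map_add, map_one]
    field_simp
    ring
  have hval : mob ((u - 1)/(u + 1)) ((v - 1)/(v + 1))
      = ((u - v) * ((starRingEnd ℂ) u + 1)) / ((u + 1) * ((starRingEnd ℂ) u + v)) := by
    rw [mob, h1, h2]
    field_simp
  rw [hval]
  have e1 : ‖(starRingEnd ℂ) u + 1‖ = ‖u + 1‖ := by
    rw [show (starRingEnd ℂ) u + 1 = (starRingEnd ℂ) (u + 1) by simp, Complex.norm_conj]
  have e2 : ‖(starRingEnd ℂ) u + v‖ = ‖u + (starRingEnd ℂ) v‖ := by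
    rw [show (starRingEnd ℂ) u + v = (starRingEnd ℂ) (u + (starRingEnd ℂ) v) by simp,
      Complex.norm_conj]
  rw [norm_div, norm_div, norm_mul, norm_mul, e1, e2]
  rw [mul_comm (‖u + 1‖) (‖u + (starRingEnd ℂ) v‖)]
  exact mul_div_mul_right _ _ (by simpa using hu1)

lemma normSq_add_conj (u v : ℂ) :
    normSq (u + (starRingEnd ℂ) v) = normSq (u - v) + 4 * u.re * v.re := by
  simp only [normSq_apply, Complex.add_re, Complex.add_im, Complex.sub_re, Complex.sub_im,
    Complex.conj_re, Complex.conj_im]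
  ring

lemma pd_halfplane_lt {u v₁ v₂ : ℂ} (hu : 0 < u.re) (h1 : 0 < v₁.re) (h2 : 0 < v₂.re)
    (key : normSq (u - v₁) * v₂.re < normSq (u - v₂) * v₁.re) :
    ‖(u - v₁) / (u + (starRingEnd ℂ) v₁)‖
      < ‖(u - v₂) / (u + (starRingEnd ℂ) v₂)‖ := by
  have hA : (0:ℝ) ≤ normSq (u - v₁) := normSq_nonneg _
  have hB : (0:ℝ) ≤ normSq (u - v₂) := normSq_nonneg _
  have hd1 : 0 < normSq (u + (starRingEnd ℂ) v₁) := by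
    rw [normSq_add_conj]; nlinarith
  have hd2 : 0 < normSq (u + (starRingEnd ℂ) v₂) := by
    rw [normSq_add_conj]; nlinarith
  rw [Complex.norm_def, Complex.norm_def]
  apply Real.sqrt_lt_sqrt (normSq_nonneg _)
  rw [normSq_div, normSq_div, normSq_add_conj, normSq_add_conj]
  rw [div_lt_div_iff₀ (by rw [normSq_add_conj] at hd1; exact hd1)
    (by rw [normSq_add_conj] at hd2; exact hd2)]
  have hmul := (mul_lt_mul_iff_right₀ (show (0:ℝ) < 4 * u.re by linarith)).2 key
  linarith [hmul]

lemma key_real {s ur ui ar ai br bi : ℝ} (hs2 : s ^ 2 = 2) (hs0 : 0 < s)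
    (hu100 : ur * ur + ui * ui = 100)
    (hn1 : ar * ar + ai * ai = s) (hre1 : ar * ar - ai * ai = 1)
    (hn2 : br * br + bi * bi = s) (hre2 : br * br - bi * bi = -1)
    (h1r : 0 < ar) (h2r : 0 < br) :
    ((ur - ar) * (ur - ar) + (ui - ai) * (ui - ai)) * br
      < ((ur - br) * (ur - br) + (ui - bi) * (ui - bi)) * ar := by
  have hsl : 1.414 ≤ s := by nlinarith [sq_nonneg (s - 1.414)]
  have hsu : s ≤ 1.415 := by nlinarith [sq_nonneg (s - 1.415)]
  have har2 : ar * ar = (s + 1) / 2 := by linarith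
  have hbr2 : br * br = (s - 1) / 2 := by linarith
  have har : 1.098 ≤ ar := by nlinarith [sq_nonneg (ar - 1.098)]
  have hbr : br ≤ 0.456 := by nlinarith [sq_nonneg (br - 0.456)]
  have c1 : (ur * ar + ui * ai) ^ 2 ≤ 100 * s := by
    have h := sq_nonneg (ur * ai - ui * ar)
    have e : (ur * ar + ui * ai) ^ 2 + (ur * ai - ui * ar) ^ 2
        = (ur * ur + ui * ui) * (ar * ar + ai * ai) := by ring
    rw [hu100, hn1] at e
    linarith
  have c2 : (ur * br + ui * bi) ^ 2 ≤ 100 * s := by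
    have h := sq_nonneg (ur * bi - ui * br)
    have e : (ur * br + ui * bi) ^ 2 + (ur * bi - ui * br) ^ 2
        = (ur * ur + ui * ui) * (br * br + bi * bi) := by ring
    rw [hu100, hn2] at e
    linarith
  have cross1 : -(11.9) ≤ ur * ar + ui * ai := by nlinarith [sq_nonneg (ur * ar + ui * ai + 11.9)]
  have cross2 : ur * br + ui * bi ≤ 11.9 := by nlinarith [sq_nonneg (ur * br + ui * bi - 11.9)]
  have hAval : (ur - ar) * (ur - ar) + (ui - ai) * (ui - ai)
      = 100 + s - 2 * (ur * ar + ui * ai) := by linear_combination hu100 + hn1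
  have hBval : (ur - br) * (ur - br) + (ui - bi) * (ui - bi)
      = 100 + s - 2 * (ur * br + ui * bi) := by linear_combination hu100 + hn2
  have hAub : (ur - ar) * (ur - ar) + (ui - ai) * (ui - ai) ≤ 125.215 := by
    rw [hAval]; linarith
  have hBlb : 77.614 ≤ (ur - br) * (ur - br) + (ui - bi) * (ui - bi) := by
    rw [hBval]; linarith
  have hAnn : (0:ℝ) ≤ (ur - ar) * (ur - ar) + (ui - ai) * (ui - ai) :=
    add_nonneg (mul_self_nonneg _) (mul_self_nonneg _)
  have hL : ((ur - ar) * (ur - ar) + (ui - ai) * (ui - ai)) * br ≤ 125.215 * 0.456 :=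
    mul_le_mul hAub hbr (le_of_lt h2r) (by norm_num)
  have hR : 77.614 * 1.098 ≤ ((ur - br) * (ur - br) + (ui - bi) * (ui - bi)) * ar :=
    mul_le_mul hBlb har (by norm_num) (by linarith)
  calc ((ur - ar) * (ur - ar) + (ui - ai) * (ui - ai)) * br ≤ 125.215 * 0.456 := hL
    _ < 77.614 * 1.098 := by norm_num
    _ ≤ ((ur - br) * (ur - br) + (ui - bi) * (ui - bi)) * ar := hR

lemma key_numeric {u v₁ v₂ : ℂ} (h100 : normSq u = 100)
    (h1sq : v₁ ^ 2 = 1 + I) (h2sq : v₂ ^ 2 = -1 + I)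
    (h1r : 0 < v₁.re) (h2r : 0 < v₂.re) :
    normSq (u - v₁) * v₂.re < normSq (u - v₂) * v₁.re := by
  have hs2 : Real.sqrt 2 ^ 2 = 2 := Real.sq_sqrt (by norm_num)
  have hs0 : 0 < Real.sqrt 2 := Real.sqrt_pos.2 (by norm_num)
  have hns1 : normSq v₁ = Real.sqrt 2 := by
    have e1 : ‖v₁‖ ^ 2 = ‖1 + I‖ := by
      rw [← h1sq]
      exact (norm_pow v₁ 2).symm
    have e2 : ‖1 + I‖ = Real.sqrt 2 := by
      rw [Complex.norm_def]
      congr 1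
      simp [normSq_apply]
      norm_num
    rw [Complex.normSq_eq_norm_sq, e1, e2]
  have hns2 : normSq v₂ = Real.sqrt 2 := by
    have e1 : ‖v₂‖ ^ 2 = ‖-1 + I‖ := by
      rw [← h2sq]
      exact (norm_pow v₂ 2).symm
    have e2 : ‖-1 + I‖ = Real.sqrt 2 := by
      rw [Complex.norm_def]
      congr 1
      simp [normSq_apply]
      norm_num
    rw [Complex.normSq_eq_norm_sq, e1, e2]
  have hre1 : v₁.re * v₁.re - v₁.im * v₁.im = 1 := by
    have : (v₁ ^ 2).re = 1 := by rw [h1sq]; simp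
    rwa [pow_two, Complex.mul_re] at this
  have hre2 : v₂.re * v₂.re - v₂.im * v₂.im = -1 := by
    have : (v₂ ^ 2).re = -1 := by rw [h2sq]; simp
    rwa [pow_two, Complex.mul_re] at this
  have hn1 : v₁.re * v₁.re + v₁.im * v₁.im = Real.sqrt 2 := by
    rw [← hns1]; rw [normSq_apply]
  have hn2 : v₂.re * v₂.re + v₂.im * v₂.im = Real.sqrt 2 := by
    rw [← hns2]; rw [normSq_apply]
  have hu100 : u.re * u.re + u.im * u.im = 100 := by rw [← h100]; rw [normSq_apply]
  have key := key_real hs2 hs0 hu100 hn1 hre1 hn2 hre2 h1r h2r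
  simp only [normSq_apply, Complex.sub_re, Complex.sub_im]
  exact key

/-- there exists `R > 1` such that for every `z` on the upper half of the
circle `∂D(-i, R)`, the hyperbolic distances in `Ω₀*` satisfy
`ρ_{Ω₀*}(z, -1) > ρ_{Ω₀*}(z, 1)`. -/
theorem slit_plane_distance_comparison (f : ℂ → ℂ) (hf : IsRiemannMap f slitPlane') :
    ∃ R : ℝ, 1 < R ∧ ∀ z : ℂ, ‖z + Complex.I‖ = R → 0 ≤ z.im →
      hypDist f z 1 < hypDist f z (-1) := by
  obtain ⟨hdf, hbf⟩ := hf
  set F := invFunOn f (ball (0:ℂ) 1) with hFdef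
  have hInv := hbf.invOn_invFunOn
  have hFmem : ∀ y ∈ slitPlane', F y ∈ ball (0:ℂ) 1 := by
    intro y hy
    obtain ⟨x, hx, rfl⟩ := hbf.surjOn hy
    rw [hFdef, hInv.1 hx]
    exact hx
  have hfF : ∀ y ∈ slitPlane', f (F y) = y := fun y hy => hInv.2 hy
  set h : ℂ → ℂ := fun p => psi (f p) with hhdef
  set hinv : ℂ → ℂ := fun q => F (psiInv q) with hinvdef
  have hd : DifferentiableOn ℂ h (ball 0 1) := by
    intro p hp
    exact (psi_differentiableAt (hbf.mapsTo hp)).comp_differentiableWithinAt p (hdf p hp)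
  have hm : MapsTo h (ball 0 1) (ball 0 1) := fun p hp => psi_mem_ball (hbf.mapsTo hp)
  have hd' : DifferentiableOn ℂ hinv (ball 0 1) := by
    intro q hq
    exact (invFunOn_differentiableAt isOpen_slitPlane' hdf hbf
      (psiInv_mem hq)).comp_differentiableWithinAt q
      (psiInv_differentiableAt hq).differentiableWithinAt
  have hm' : MapsTo hinv (ball 0 1) (ball 0 1) := fun q hq => hFmem _ (psiInv_mem hq)
  have hli : ∀ p ∈ ball (0:ℂ) 1, hinv (h p) = p := by
    intro p hp
    show F (psiInv (psi (f p))) = p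
    rw [psiInv_psi (hbf.mapsTo hp), hFdef, hInv.1 hp]
  have hpd : ∀ y ∈ slitPlane', ∀ w ∈ slitPlane',
      ‖mob (psi y) (psi w)‖ = ‖mob (F y) (F w)‖ := by
    intro y hy w hw
    have hkey := pd_invariance hd hm hd' hm' hli (hFmem y hy) (hFmem w hw)
    have e1 : h (F y) = psi y := by show psi (f (F y)) = psi y; rw [hfF y hy]
    have e2 : h (F w) = psi w := by show psi (f (F w)) = psi w; rw [hfF w hw]
    rw [e1, e2] at hkey
    exact hkey
  refine ⟨100, by norm_num, fun z habs him => ?_⟩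
  have hz : z ∈ slitPlane' := by
    rw [mem_slitPlane'_iff, Complex.mem_slitPlane_iff]
    right
    simp only [Complex.add_im, Complex.I_im]
    linarith
  have h1 : (1:ℂ) ∈ slitPlane' := by
    rw [mem_slitPlane'_iff, Complex.mem_slitPlane_iff]
    left
    simp
  have hm1 : (-1:ℂ) ∈ slitPlane' := by
    rw [mem_slitPlane'_iff, Complex.mem_slitPlane_iff]
    right
    simp
  show rhoDisk (F z) (F 1) < rhoDisk (F z) (F (-1))
  apply rhoDisk_strict_mono (hFmem z hz) (hFmem 1 h1) (hFmem (-1) hm1)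
  rw [← hpd z hz 1 h1, ← hpd z hz (-1) hm1]
  have hupos : 0 < (sq2 (z + I)).re := slit_re_pos hz
  have hv1pos : 0 < (sq2 ((1:ℂ) + I)).re := slit_re_pos h1
  have hv2pos : 0 < (sq2 ((-1:ℂ) + I)).re := slit_re_pos hm1
  have e1 : ‖mob (psi z) (psi 1)‖ = ‖
      (sq2 (z + I) - sq2 ((1:ℂ) + I)) / (sq2 (z + I) + (starRingEnd ℂ) (sq2 ((1:ℂ) + I)))‖ :=
    cayley_mob_abs hupos hv1pos
  have e2 : ‖mob (psi z) (psi (-1))‖ = ‖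
      (sq2 (z + I) - sq2 ((-1:ℂ) + I)) / (sq2 (z + I) + (starRingEnd ℂ) (sq2 ((-1:ℂ) + I)))‖ :=
    cayley_mob_abs hupos hv2pos
  rw [e1, e2]
  apply pd_halfplane_lt hupos hv1pos hv2pos
  apply key_numeric
  · rw [Complex.normSq_eq_norm_sq, ← norm_pow, sq2_sq]
    exact habs
  · exact sq2_sq
  · exact sq2_sq
  · exact hv1pos
  · exact hv2pos
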